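/- Let D be a semi-complete digraph containing the bidirected star ↔S4 on four vertices as a subdigraph. Then D is 3-dicritical if and only if D is isomorphic to the directed wheel W3. -/

import Mathlib

/-- A (loopless, simple) digraph on vertex type `V`. -/
structure SimpleDigraph (V : Type) where
  Adj : V → V → Prop
  loopless : ∀ v, ¬ Adj v v

namespace SimpleDigraph

/-- A set of arcs (given as a relation) is acyclic if it admits no directed closed walk. -/
def AcyclicRel {V : Type} (A : V → V → Prop) : Prop :=
  ∀ v, ¬ Relation.TransGen A v v

/-- A set of arcs is 2-dicolourable if the vertices can be coloured with two colours
so that each colour class induces an acyclic subdigraph. -/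
def Dicolourable2Rel {V : Type} (A : V → V → Prop) : Prop :=
  ∃ φ : V → Fin 2, ∀ i : Fin 2,
    AcyclicRel (fun a b => A a b ∧ φ a = i ∧ φ b = i)

/-- A digraph is 2-dicolourable if its vertices can be coloured with two colours
so that each colour class induces an acyclic subdigraph. -/
def Dicolourable2 {V : Type} (D : SimpleDigraph V) : Prop :=
  Dicolourable2Rel D.Adj

/-- `(S, A)` describes a subdigraph of `D`: its vertex set is `S` and its arcs
are given by `A`, which must join vertices of `S` and be arcs of `D`. -/
def IsSubdigraphOn {V : Type} (D : SimpleDigraph V) (S : Set V) (A : V → V → Prop) : Prop :=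
  ∀ u v, A u v → u ∈ S ∧ v ∈ S ∧ D.Adj u v

/-- `D` is 3-dicritical: `D` is not 2-dicolourable, but every proper subdigraph of `D`
(one missing a vertex or an arc) is 2-dicolourable. -/
def Dicritical3 {V : Type} (D : SimpleDigraph V) : Prop :=
  ¬ D.Dicolourable2 ∧
    ∀ (S : Set V) (A : V → V → Prop), D.IsSubdigraphOn S A →
      (S ≠ Set.univ ∨ A ≠ D.Adj) → Dicolourable2Rel A

/-- A digraph is semi-complete if any two distinct vertices are joined by at least one arc. -/
def SemiComplete {V : Type} (D : SimpleDigraph V) : Prop :=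
  ∀ u v : V, u ≠ v → D.Adj u v ∨ D.Adj v u

/-- A tournament is a semi-complete digraph with no digon. -/
def IsTournament {V : Type} (D : SimpleDigraph V) : Prop :=
  D.SemiComplete ∧ ∀ u v : V, ¬ (D.Adj u v ∧ D.Adj v u)

/-- Isomorphism of digraphs. -/
def Iso {V W : Type} (D : SimpleDigraph V) (E : SimpleDigraph W) : Prop :=
  ∃ e : V ≃ W, ∀ u v : V, D.Adj u v ↔ E.Adj (e u) (e v)

/-- `D` contains (a copy of) `H` as a subdigraph. -/
def ContainsSub {V W : Type} (D : SimpleDigraph V) (H : SimpleDigraph W) : Prop :=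
  ∃ f : W → V, Function.Injective f ∧ ∀ a b, H.Adj a b → D.Adj (f a) (f b)

/-- `D` contains (a copy of) `H` as an induced subdigraph. -/
def ContainsInduced {V W : Type} (D : SimpleDigraph V) (H : SimpleDigraph W) : Prop :=
  ∃ f : W → V, Function.Injective f ∧ ∀ a b, H.Adj a b ↔ D.Adj (f a) (f b)

end SimpleDigraph

/-- An auxiliary constructor: the digraph on `Fin n` whose arcs are the pairs in `l`. -/
def digraphOfPairs (n : ℕ) (l : List (ℕ × ℕ)) (h : ∀ v : Fin n, (v.val, v.val) ∉ l) :
    SimpleDigraph (Fin n) :=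
  ⟨fun u v => (u.val, v.val) ∈ l, h⟩

/-- The bidirected complete graph `↔K2` on two vertices (a digon). -/
def biK2 : SimpleDigraph (Fin 2) :=
  ⟨fun u v => u ≠ v, fun v h => h rfl⟩

/-- The bidirected complete graph `↔K3` on three vertices. -/
def biK3 : SimpleDigraph (Fin 3) :=
  ⟨fun u v => u ≠ v, fun v h => h rfl⟩

/-- The directed cycle `C3` on three vertices. -/
def dirC3 : SimpleDigraph (Fin 3) :=
  ⟨fun u v => v = u + 1, by decide⟩

/-- The directed wheel `W3`: a directed triangle `0 → 1 → 2 → 0` together with a hub `3`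
joined by a digon to each triangle vertex. -/
def dirW3 : SimpleDigraph (Fin 4) :=
  digraphOfPairs 4 [(3,0),(0,3),(3,1),(1,3),(3,2),(2,3),(0,1),(1,2),(2,0)] (by decide)

/-- The digraph `H5` on vertices `u0, …, u4`: digons between `u0,u1` and between `u0,u4`,
and simple arcs `u4u1, u1u3, u1u2, u3u4, u2u4, u3u0, u0u2, u2u3`. -/
def digraphH5 : SimpleDigraph (Fin 5) :=
  digraphOfPairs 5 [(0,1),(1,0),(0,4),(4,0),(4,1),(1,3),(1,2),(3,4),(2,4),(3,0),(0,2),(2,3)]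
    (by decide)

/-- The Paley tournament `P7` on `ℤ/7ℤ`: an arc from `i` to `j` iff `j - i ∈ {1, 2, 4}`. -/
def dirP7 : SimpleDigraph (Fin 7) :=
  ⟨fun i j => j - i = 1 ∨ j - i = 2 ∨ j - i = 4, by decide⟩

/-- The rotative digraph `R(↔K2, ↔K2)`: digons `{0,1}` and `{2,3}`, all arcs from `{0,1}`
to `{2,3}`, all arcs from `{2,3}` to the extra vertex `4`, all arcs from `4` to `{0,1}`. -/
def rotK2K2 : SimpleDigraph (Fin 5) :=
  digraphOfPairs 5 [(0,1),(1,0),(2,3),(3,2),(0,2),(0,3),(1,2),(1,3),(2,4),(3,4),(4,0),(4,1)]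
    (by decide)

/-- The rotative digraph `R(↔K2, C3)`. -/
def rotK2C3 : SimpleDigraph (Fin 6) :=
  digraphOfPairs 6 [(0,1),(1,0),(2,3),(3,4),(4,2),(0,2),(0,3),(0,4),(1,2),(1,3),(1,4),
    (2,5),(3,5),(4,5),(5,0),(5,1)] (by decide)

/-- The rotative digraph `R(C3, ↔K2)`. -/
def rotC3K2 : SimpleDigraph (Fin 6) :=
  digraphOfPairs 6 [(0,1),(1,2),(2,0),(3,4),(4,3),(0,3),(0,4),(1,3),(1,4),(2,3),(2,4),
    (3,5),(4,5),(5,0),(5,1),(5,2)] (by decide)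

/-- The rotative digraph `R(C3, C3)`. -/
def rotC3C3 : SimpleDigraph (Fin 7) :=
  digraphOfPairs 7 [(0,1),(1,2),(2,0),(3,4),(4,5),(5,3),(0,3),(0,4),(0,5),(1,3),(1,4),(1,5),
    (2,3),(2,4),(2,5),(3,6),(4,6),(5,6),(6,0),(6,1),(6,2)] (by decide)

/-- The bidirected star `↔S4` on four vertices: the centre `0` is joined by a digon to
each of `1`, `2`, `3`. -/
def biS4 : SimpleDigraph (Fin 4) :=
  digraphOfPairs 4 [(0,1),(1,0),(0,2),(2,0),(0,3),(3,0)] (by decide)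

/-!
The centre `c` of the star is joined by digons to its three leaves, so every 2-dicolouring gives
the leaves one colour, the other one than `c`. If the leaves span a directed triangle, `D` contains
`W3`, which is not 2-dicolourable; criticality forces every arc of `D` to lie in this copy, and
semi-completeness then leaves no room for further vertices. If they span a transitive triangle
`s → m → t`, `s → t`, a 2-dicolouring of `D - st` is one of `D` as well, because `st` is parallel
to the monochromatic path `s → m → t`.
-/

open Relation

namespace SimpleDigraph

variable {V W : Type}

def IsDicolouring (A : V → V → Prop) (φ : V → Fin 2) : Prop :=
  ∀ i : Fin 2, AcyclicRel fun a b => A a b ∧ φ a = i ∧ φ b = i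

def deleteArc (A : V → V → Prop) (s t : V) : V → V → Prop :=
  fun x y => A x y ∧ ¬(x = s ∧ y = t)

instance [DecidableEq V] {A : V → V → Prop} [DecidableRel A] {s t : V} :
    DecidableRel (deleteArc A s t) := fun x y =>
  inferInstanceAs (Decidable (A x y ∧ ¬(x = s ∧ y = t)))

def Digon (D : SimpleDigraph V) (u v : V) : Prop :=
  D.Adj u v ∧ D.Adj v u

theorem ne_of_adj (D : SimpleDigraph V) {u v : V} (h : D.Adj u v) : u ≠ v :=
  fun e => D.loopless u (e ▸ h)

theorem Digon.ne {D : SimpleDigraph V} {u v : V} (h : D.Digon u v) : u ≠ v :=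
  D.ne_of_adj h.1

theorem acyclicRel_of_rank {α : Type} [Preorder α] {A : V → V → Prop} (f : V → α)
    (hf : ∀ a b, A a b → f a < f b) : AcyclicRel A := by
  have key : ∀ a b, TransGen A a b → f a < f b := fun a b hab => by
    induction hab with
    | single h => exact hf _ _ h
    | tail _ h ih => exact ih.trans (hf _ _ h)
  exact fun v hv => lt_irrefl _ (key v v hv)

theorem AcyclicRel.of_le_transGen {A B : V → V → Prop} (hB : AcyclicRel B)
    (h : ∀ a b, A a b → TransGen B a b) : AcyclicRel A :=
  fun v hv => hB v (TransGen.closed h v v hv)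

theorem dicolourable2Rel_of_rank {α : Type} [Preorder α] {A : V → V → Prop}
    (φ : V → Fin 2) (f : V → α) (hf : ∀ a b, A a b → φ a = φ b → f a < f b) :
    Dicolourable2Rel A :=
  ⟨φ, fun _ => acyclicRel_of_rank f fun a b h => hf a b h.1 (h.2.1.trans h.2.2.symm)⟩

theorem Dicolourable2Rel.comap {A : V → V → Prop} {B : W → W → Prop} (g : V → W)
    (hg : ∀ a b, A a b → B (g a) (g b)) : Dicolourable2Rel B → Dicolourable2Rel A := by
  rintro ⟨ψ, hψ⟩
  exact ⟨ψ ∘ g, fun i v hv =>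
    hψ i (g v) (hv.lift g fun a b h => ⟨hg a b h.1, h.2.1, h.2.2⟩)⟩

theorem IsDicolouring.ne_of_adj {A : V → V → Prop} {φ : V → Fin 2} (hφ : IsDicolouring A φ)
    {u v : V} (huv : A u v) (hvu : A v u) : φ u ≠ φ v := fun he =>
  hφ (φ u) u (.tail (.single ⟨huv, rfl, he.symm⟩) ⟨hvu, he.symm, rfl⟩)

theorem IsDicolouring.of_deleteArc {A : V → V → Prop} {φ : V → Fin 2} {s t : V}
    (hφ : IsDicolouring (deleteArc A s t) φ)
    (hpath : TransGen (fun a b => deleteArc A s t a b ∧ φ a = φ s ∧ φ b = φ s) s t) :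
    IsDicolouring A φ := by
  refine fun i => (hφ i).of_le_transGen ?_
  rintro x y ⟨hxy, rfl, hy⟩
  by_cases hst : x = s ∧ y = t
  · obtain ⟨rfl, rfl⟩ := hst
    exact hpath
  · exact .single ⟨⟨hxy, hst⟩, rfl, hy⟩

theorem dicritical3_of_forall_deleteArc {D : SimpleDigraph V} (hnc : ¬ D.Dicolourable2)
    (hdel : ∀ u v, D.Adj u v → Dicolourable2Rel (deleteArc D.Adj u v))
    (hout : ∀ v, ∃ w, D.Adj v w) : D.Dicritical3 := by
  refine ⟨hnc, fun S A hA hproper => ?_⟩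
  obtain ⟨u, v, huv, hnA⟩ : ∃ u v, D.Adj u v ∧ ¬ A u v := by
    rcases hproper with hS | hAD
    · obtain ⟨v, hv⟩ := (Set.ne_univ_iff_exists_notMem S).1 hS
      obtain ⟨w, hw⟩ := hout v
      exact ⟨v, w, hw, fun h => hv (hA _ _ h).1⟩
    · by_contra! h
      exact hAD (funext₂ fun u v => propext ⟨fun h' => (hA u v h').2.2, h u v⟩)
  refine (hdel u v huv).comap id fun x y hxy => ⟨(hA x y hxy).2.2, ?_⟩
  rintro ⟨rfl, rfl⟩
  exact hnA hxy

theorem Iso.dicritical3 {D : SimpleDigraph V} {E : SimpleDigraph W} (h : D.Iso E)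
    (hE : E.Dicritical3) : D.Dicritical3 := by
  obtain ⟨e, he⟩ := h
  have he' : ∀ p q, E.Adj p q ↔ D.Adj (e.symm p) (e.symm q) := fun p q => by
    simp only [he, Equiv.apply_symm_apply]
  refine ⟨fun hD => hE.1 (hD.comap e.symm fun p q => (he' p q).1), fun S A hA hproper => ?_⟩
  refine (hE.2 (e.symm ⁻¹' S) (fun p q => A (e.symm p) (e.symm q))
    (fun p q h => ⟨(hA _ _ h).1, (hA _ _ h).2.1, (he' p q).2 (hA _ _ h).2.2⟩) ?_).comap e
    fun x y h => by simpa using h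
  refine hproper.imp (fun hS hS' => hS ?_) fun hAD hAE => hAD ?_
  · simpa using congrArg (e ⁻¹' ·) hS'
  · funext x y
    simpa [he] using congrFun₂ hAE (e x) (e y)

theorem Dicritical3.adj_eq_map {D : SimpleDigraph V} {H : SimpleDigraph W}
    (hD : D.Dicritical3) (hH : ¬ H.Dicolourable2) {f : W → V}
    (hf : ∀ a b, H.Adj a b → D.Adj (f a) (f b)) : D.Adj = Relation.Map H.Adj f f := by
  by_contra hne
  refine hH ((hD.2 Set.univ _ ?_ (Or.inr (Ne.symm hne))).comap f fun a b h => ⟨a, b, h, rfl, rfl⟩)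
  rintro _ _ ⟨a, b, h, rfl, rfl⟩
  exact ⟨trivial, trivial, hf a b h⟩

theorem SemiComplete.surjective_of_adj_eq_map [Nonempty W] {D : SimpleDigraph V}
    {H : SimpleDigraph W} (hsc : D.SemiComplete) {f : W → V}
    (h : D.Adj = Relation.Map H.Adj f f) : Function.Surjective f := by
  intro v
  obtain ⟨w⟩ := ‹Nonempty W›
  by_cases hv : v = f w
  · exact ⟨w, hv.symm⟩
  rcases hsc v (f w) hv with hvw | hwv
  · obtain ⟨a, _, _, ha, _⟩ := h ▸ hvw
    exact ⟨a, ha⟩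
  · obtain ⟨_, b, _, _, hb⟩ := h ▸ hwv
    exact ⟨b, hb⟩

theorem iso_of_adj_eq_map {D : SimpleDigraph V} {H : SimpleDigraph W} (e : W ≃ V)
    (h : D.Adj = Relation.Map H.Adj e e) : D.Iso H := by
  refine ⟨e.symm, fun u v => ?_⟩
  rw [h]
  constructor
  · rintro ⟨a, b, hab, rfl, rfl⟩
    simpa using hab
  · exact fun huv => ⟨_, _, huv, e.apply_symm_apply u, e.apply_symm_apply v⟩

theorem Dicritical3.iso_of_containsSub [Nonempty W] {D : SimpleDigraph V} {H : SimpleDigraph W}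
    (hD : D.Dicritical3) (hsc : D.SemiComplete) (hH : ¬ H.Dicolourable2)
    (hsub : D.ContainsSub H) : D.Iso H := by
  obtain ⟨f, hf_inj, hf⟩ := hsub
  have hmap := hD.adj_eq_map hH hf
  exact iso_of_adj_eq_map (.ofBijective f ⟨hf_inj, hsc.surjective_of_adj_eq_map hmap⟩) hmap

theorem SemiComplete.exists_transitive_or_cyclic_triple {D : SimpleDigraph V}
    (hsc : D.SemiComplete) {P : V → Prop} {x y z : V} (hxy : x ≠ y) (hyz : y ≠ z)
    (hxz : x ≠ z) (hx : P x) (hy : P y) (hz : P z) :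
    (∃ s m t, P s ∧ P m ∧ P t ∧ D.Adj s m ∧ D.Adj m t ∧ D.Adj s t) ∨
      ∃ a b d, P a ∧ P b ∧ P d ∧ D.Adj a b ∧ D.Adj b d ∧ D.Adj d a := by
  rcases hsc x y hxy with h1 | h1 <;> rcases hsc y z hyz with h2 | h2 <;>
    rcases hsc x z hxz with h3 | h3
  · exact .inl ⟨x, y, z, hx, hy, hz, h1, h2, h3⟩
  · exact .inr ⟨x, y, z, hx, hy, hz, h1, h2, h3⟩
  · exact .inl ⟨x, z, y, hx, hz, hy, h3, h2, h1⟩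
  · exact .inl ⟨z, x, y, hz, hx, hy, h3, h1, h2⟩
  · exact .inl ⟨y, x, z, hy, hx, hz, h1, h3, h2⟩
  · exact .inl ⟨y, z, x, hy, hz, hx, h2, h3, h1⟩
  · exact .inr ⟨x, z, y, hx, hz, hy, h3, h2, h1⟩
  · exact .inl ⟨z, y, x, hz, hy, hx, h2, h1, h3⟩

theorem not_dicritical3_of_transitive_triangle {D : SimpleDigraph V} {c s m t : V}
    (hs : D.Digon c s) (hm : D.Digon c m) (ht : D.Digon c t)
    (hsm : D.Adj s m) (hmt : D.Adj m t) (hst : D.Adj s t) : ¬ D.Dicritical3 := by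
  rintro ⟨hnc, hcrit⟩
  have hdel_ne : deleteArc D.Adj s t ≠ D.Adj := fun h => (h ▸ hst).2 ⟨rfl, rfl⟩
  obtain ⟨φ, hφ⟩ : ∃ φ, IsDicolouring (deleteArc D.Adj s t) φ :=
    hcrit Set.univ _ (fun x y h => ⟨trivial, trivial, h.1⟩) (Or.inr hdel_ne)
  have hcs := hs.ne
  have hct := ht.ne
  have keep_from_c : ∀ {v}, D.Adj c v → deleteArc D.Adj s t c v := fun h => ⟨h, fun e => hcs e.1⟩
  have keep_to_c : ∀ {v}, D.Adj v c → deleteArc D.Adj s t v c := fun h => ⟨h, fun e => hct e.2⟩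
  have colour_of_spoke : ∀ {v}, D.Digon c v → φ v ≠ φ c := fun h =>
    (hφ.ne_of_adj (keep_from_c h.1) (keep_to_c h.2)).symm
  have hφm : φ m = φ s := by
    have := colour_of_spoke hs; have := colour_of_spoke hm; omega
  have hφt : φ t = φ s := by
    have := colour_of_spoke hs; have := colour_of_spoke ht; omega
  refine hnc ⟨φ, hφ.of_deleteArc (.tail (.single ⟨⟨hsm, ?_⟩, rfl, hφm⟩) ⟨⟨hmt, ?_⟩, hφm, hφt⟩)⟩
  · exact fun e => D.ne_of_adj hmt e.2
  · exact fun e => D.ne_of_adj hsm e.1.symm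

instance : DecidableRel dirW3.Adj := fun a b =>
  inferInstanceAs (Decidable ((a.val, b.val) ∈ _))

instance : DecidableRel biS4.Adj := fun a b =>
  inferInstanceAs (Decidable ((a.val, b.val) ∈ _))

theorem not_dicolourable2_dirW3 : ¬ dirW3.Dicolourable2 := by
  rintro ⟨φ, hφ⟩
  have colour_of_rim : ∀ i : Fin 4, i ≠ 3 → φ i ≠ φ 3 := fun i hi =>
    IsDicolouring.ne_of_adj hφ (by revert i; decide) (by revert i; decide)
  have h1 : φ 1 = φ 0 := by
    have := colour_of_rim 0 (by decide); have := colour_of_rim 1 (by decide); omega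
  have h2 : φ 2 = φ 0 := by
    have := colour_of_rim 0 (by decide); have := colour_of_rim 2 (by decide); omega
  exact hφ (φ 0) 0 (.tail (.tail (.single ⟨by decide, rfl, h1⟩) ⟨by decide, h1, h2⟩)
    ⟨by decide, h2, rfl⟩)

theorem dicolourable2Rel_deleteArc_dirW3 (p q : Fin 4) (h : dirW3.Adj p q) :
    Dicolourable2Rel (deleteArc dirW3.Adj p q) := by
  fin_cases p <;> fin_cases q <;>
    first
      | exact absurd h (by decide)
      | exact dicolourable2Rel_of_rank ![0, 0, 0, 1] ![2, 0, 1, 0] (by decide)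
      | exact dicolourable2Rel_of_rank ![0, 0, 0, 1] ![1, 2, 0, 0] (by decide)
      | exact dicolourable2Rel_of_rank ![0, 0, 0, 1] ![0, 1, 2, 0] (by decide)
      | exact dicolourable2Rel_of_rank ![1, 0, 0, 1] ![0, 0, 1, 1] (by decide)
      | exact dicolourable2Rel_of_rank ![1, 0, 0, 1] ![1, 0, 1, 0] (by decide)
      | exact dicolourable2Rel_of_rank ![0, 1, 0, 1] ![1, 0, 0, 1] (by decide)
      | exact dicolourable2Rel_of_rank ![0, 1, 0, 1] ![1, 1, 0, 0] (by decide)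
      | exact dicolourable2Rel_of_rank ![0, 0, 1, 1] ![0, 1, 0, 1] (by decide)
      | exact dicolourable2Rel_of_rank ![0, 0, 1, 1] ![0, 1, 1, 0] (by decide)

theorem dicritical3_dirW3 : dirW3.Dicritical3 :=
  dicritical3_of_forall_deleteArc not_dicolourable2_dirW3 dicolourable2Rel_deleteArc_dirW3
    (by decide)

theorem containsSub_dirW3 {D : SimpleDigraph V} {c a b d : V}
    (ha : D.Digon c a) (hb : D.Digon c b) (hd : D.Digon c d)
    (hab : D.Adj a b) (hbd : D.Adj b d) (hda : D.Adj d a) : D.ContainsSub dirW3 := by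
  have := ha.ne
  have := hb.ne
  have := hd.ne
  have := D.ne_of_adj hab
  have := D.ne_of_adj hbd
  have := D.ne_of_adj hda
  refine ⟨![a, b, d, c], fun i j hij => ?_, fun i j hij => ?_⟩
  · fin_cases i <;> fin_cases j <;> simp_all
  · fin_cases i <;> fin_cases j <;>
      first
        | exact absurd hij (by decide)
        | simp [ha.1, ha.2, hb.1, hb.2, hd.1, hd.2, hab, hbd, hda]

end SimpleDigraph

open SimpleDigraph in
theorem dicritical3_of_contains_biS4_general
    {V : Type} (D : SimpleDigraph V) (hsc : D.SemiComplete)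
    (hS4 : D.ContainsSub biS4) :
    D.Dicritical3 ↔ D.Iso dirW3 := by
  refine ⟨fun hD => ?_, fun h => h.dicritical3 dicritical3_dirW3⟩
  obtain ⟨f, hf_inj, hf⟩ := hS4
  have hspoke : ∀ i : Fin 4, i ≠ 0 → D.Digon (f 0) (f i) := fun i hi =>
    ⟨hf 0 i (by revert i; decide), hf i 0 (by revert i; decide)⟩
  rcases hsc.exists_transitive_or_cyclic_triple (P := D.Digon (f 0))
      (hf_inj.ne (by decide : (1 : Fin 4) ≠ 2)) (hf_inj.ne (by decide : (2 : Fin 4) ≠ 3))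
      (hf_inj.ne (by decide : (1 : Fin 4) ≠ 3))
      (hspoke 1 (by decide)) (hspoke 2 (by decide)) (hspoke 3 (by decide)) with
    ⟨s, m, t, hs, hm, ht, hsm, hmt, hst⟩ | ⟨a, b, d, ha, hb, hd, hab, hbd, hda⟩
  · exact absurd hD (not_dicritical3_of_transitive_triangle hs hm ht hsm hmt hst)
  · exact hD.iso_of_containsSub hsc not_dicolourable2_dirW3
      (containsSub_dirW3 ha hb hd hab hbd hda)

/-- A semi-complete digraph containing the bidirected star `↔S4` as a
subdigraph is 3-dicritical if and only if it is isomorphic to the directed wheel `W3`. -/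
theorem dicritical3_of_contains_biS4
    {V : Type} [Fintype V] (D : SimpleDigraph V) (hsc : D.SemiComplete)
    (hS4 : D.ContainsSub biS4) :
    D.Dicritical3 ↔ D.Iso dirW3 :=
  dicritical3_of_contains_biS4_general D hsc hS4
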